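/- In every matroid congestion game with priority lists and unit-weight players, a pure Nash equilibrium exists. In particular, the greedy algorithm (repeatedly pick a resource of minimum marginal cost and assign it to the highest-priority player for whom it is independent with their current set) terminates with a pure Nash equilibrium. -/

import Mathlib

/-!
With the other players fixed, the cost player `i` pays on a resource `e` does not depend on its
other resources: it is `deviationCost c π s i e`. Hence a best response of `i` is a minimum-weight
basis of `M i` for these weights, and the basis produced by the matroid greedy algorithm is one.

The game's greedy algorithm repeatedly gives a resource of least marginal cost `c e (load + 1)`
to the highest-priority player that can still add it. A resource taken by `i` is afterwards only
taken by players of lower priority, so `i` finally pays at most that marginal cost on it; a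
resource `i` could have taken instead is held only by players of higher priority, so `i`'s final
deviation cost on it is at least its marginal cost at that time. Thus every player's acquisitions
form a matroid-greedy sequence for its final deviation costs.
-/

open Finset

/-- Cost of unit-weight player `i` in a congestion game with priority lists:
sum over the resources in its strategy of `c e` evaluated at the number of
players using `e` with priority at least as high as `i`'s. -/
def matCost {n : ℕ} {E : Type*} [Fintype E] [DecidableEq E]
    (c : E → ℕ → ℝ) (π : E → Fin n → ℕ)
    (s : Fin n → Finset E) (i : Fin n) : ℝ :=
  ∑ e ∈ s i,
    c e ((Finset.univ.filter (fun i' => e ∈ s i' ∧ π e i' ≤ π e i)).card)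

namespace Matroid

variable {α β : Type*} [DecidableEq α]

def IsGreedyStep [LE β] (M : Matroid α) (w : α → β) (A A' : Finset α) : Prop :=
  ∃ x ∉ A, (∀ e ∉ A, M.Indep (insert e ↑A) → w x ≤ w e) ∧ A' = insert x A

variable {M : Matroid α}

lemma subset_of_greedy [LE β] {w : α → β} {S B : Finset α}
    (h : Relation.ReflTransGen (M.IsGreedyStep w) S B) : S ⊆ B := by
  induction h with
  | refl => rfl
  | tail _ hstep ih =>
    obtain ⟨x, -, -, rfl⟩ := hstep
    exact ih.trans (subset_insert x _)

theorem sum_sdiff_le_of_greedy [AddCommMonoid β] [PartialOrder β] [IsOrderedAddMonoid β]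
    {w : α → β} {S B T : Finset α}
    (h : Relation.ReflTransGen (M.IsGreedyStep w) S B) (hB : M.Indep ↑B) (hT : M.Indep ↑T)
    (hST : S ⊆ T) (hcard : #T = #B) : ∑ e ∈ B \ S, w e ≤ ∑ e ∈ T \ S, w e := by
  induction h generalizing T with
  | refl => rw [eq_of_subset_of_card_le hST hcard.le]
  | @tail B _ hSB hstep ih =>
    obtain ⟨x, hxB, hmin, rfl⟩ := hstep
    have hBi : M.Indep ↑B := hB.subset (by simp)
    obtain ⟨e, heT, heB, hins⟩ :=
      hBi.augment_finset hT (by rw [hcard, card_insert_of_notMem hxB]; omega)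
    have hxS : x ∉ S := fun hx => hxB (subset_of_greedy hSB hx)
    have heS : e ∉ S := fun he => heB (subset_of_greedy hSB he)
    have hrest := ih hBi (hT.subset (by simp)) (subset_erase.2 ⟨hST, heS⟩)
      (by rw [card_erase_of_mem heT, hcard, card_insert_of_notMem hxB]; rfl)
    calc ∑ a ∈ insert x B \ S, w a = w x + ∑ a ∈ B \ S, w a := by
          rw [insert_sdiff_of_notMem _ hxS, sum_insert (by simp [hxB])]
      _ ≤ w e + ∑ a ∈ (T \ S).erase e, w a := by
          rw [← erase_sdiff_comm]; exact add_le_add (hmin e heB hins) hrest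
      _ = ∑ a ∈ T \ S, w a := add_sum_erase _ _ (mem_sdiff.2 ⟨heT, heS⟩)

end Matroid

section CongestionGame

variable {n : ℕ} {E : Type*}

def CanAdd (M : Fin n → Matroid E) (s : Fin n → Finset E) (i : Fin n) (e : E) : Prop :=
  e ∉ s i ∧ (M i).Indep (insert e ↑(s i))

lemma CanAdd.anti {M : Fin n → Matroid E} {s s' : Fin n → Finset E} {i : Fin n} {e : E}
    (h : CanAdd M s' i e) (hss : s i ⊆ s' i) : CanAdd M s i e :=
  ⟨fun he => h.1 (hss he), h.2.subset (Set.insert_subset_insert (coe_subset.2 hss))⟩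

variable [DecidableEq E]

def load (s : Fin n → Finset E) (e : E) : ℕ := #{i | e ∈ s i}

def deviationCost (c : E → ℕ → ℝ) (π : E → Fin n → ℕ) (s : Fin n → Finset E)
    (i : Fin n) (e : E) : ℝ :=
  c e (#{i' | i' ≠ i ∧ e ∈ s i' ∧ π e i' < π e i} + 1)

lemma matCost_update_eq_sum_deviationCost [Fintype E] {c : E → ℕ → ℝ} {π : E → Fin n → ℕ}
    (hπ : ∀ e, Function.Injective (π e)) (s : Fin n → Finset E) (i : Fin n) (t : Finset E) :
    matCost c π (Function.update s i t) i = ∑ e ∈ t, deviationCost c π s i e := by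
  rw [matCost, Function.update_self]
  refine sum_congr rfl fun e he => congrArg (c e) ?_
  rw [← card_insert_of_notMem (a := i) (by simp)]
  congr 1
  ext j
  by_cases hji : j = i
  · subst hji; simp [he]
  · simp [hji, lt_iff_le_and_ne, (hπ e).ne hji]

lemma mem_update_insert {s : Fin n → Finset E} {i j : Fin n} {e x : E} :
    x ∈ Function.update s i (insert e (s i)) j ↔ x ∈ s j ∨ (j = i ∧ x = e) := by
  by_cases hji : j = i
  · subst hji; simp [or_comm]
  · simp [hji]

lemma subset_update_insert (s : Fin n → Finset E) (i j : Fin n) (e : E) :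
    s j ⊆ Function.update s i (insert e (s i)) j :=
  fun _ hx => mem_update_insert.2 (Or.inl hx)

lemma sum_card_compl_update_insert_lt [Fintype E] {s : Fin n → Finset E} {i : Fin n} {e : E}
    (he : e ∉ s i) :
    ∑ j, #(Function.update s i (insert e (s i)) j)ᶜ < ∑ j, #(s j)ᶜ := by
  refine sum_lt_sum (fun j _ => card_le_card (compl_subset_compl.2 (subset_update_insert s i j e)))
    ⟨i, mem_univ i, card_lt_card (compl_ssubset_compl.2 ?_)⟩
  rw [Function.update_self]
  exact ssubset_insert he

variable (M : Fin n → Matroid E) (c : E → ℕ → ℝ) (π : E → Fin n → ℕ)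

structure IsGreedyState (s : Fin n → Finset E) : Prop where
  indep : ∀ i, (M i).Indep ↑(s i)
  priority_lt : ∀ e i i', e ∈ s i' → CanAdd M s i e → π e i' < π e i

structure IsGreedyChoice (s : Fin n → Finset E) (i : Fin n) (e : E) : Prop where
  canAdd : CanAdd M s i e
  cost_le : ∀ i' e', CanAdd M s i' e' → c e (load s e + 1) ≤ c e' (load s e' + 1)
  priority_le : ∀ i', CanAdd M s i' e → π e i ≤ π e i'

structure IsGreedyCompletion (s sf : Fin n → Finset E) : Prop where
  isBase : ∀ i, (M i).IsBase ↑(sf i)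
  priority_lt : ∀ e i i', e ∈ sf i → e ∉ s i → e ∈ s i' → π e i' < π e i
  greedy : ∀ i, Relation.ReflTransGen ((M i).IsGreedyStep (deviationCost c π sf i)) (s i) (sf i)

variable {M c π}

lemma exists_isGreedyChoice [Fintype E] {s : Fin n → Finset E} (h : ∃ i e, CanAdd M s i e) :
    ∃ i e, IsGreedyChoice M c π s i e := by
  obtain ⟨i, e, h⟩ := h
  obtain ⟨⟨_, e₀⟩, he₀, hmin⟩ := Set.exists_min_image {p : Fin n × E | CanAdd M s p.1 p.2}
    (fun p => c p.2 (load s p.2 + 1)) (Set.toFinite _) ⟨(i, e), h⟩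
  obtain ⟨i₀, hi₀, hfirst⟩ := Set.exists_min_image {i | CanAdd M s i e₀} (π e₀)
    (Set.toFinite _) ⟨_, he₀⟩
  exact ⟨i₀, e₀, hi₀, fun i' e' h' => hmin (i', e') h', hfirst⟩

lemma isGreedyCompletion_self {s : Fin n → Finset E} (hs : IsGreedyState M π s)
    (h : ∀ i e, ¬ CanAdd M s i e) : IsGreedyCompletion M c π s s where
  isBase i := (hs.indep i).isBase_of_forall_insert fun e he hins =>
    h i e ⟨fun h' => he.2 (mem_coe.2 h'), hins⟩
  priority_lt _ _ _ he hne _ := absurd he hne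
  greedy _ := .refl

lemma IsGreedyState.update (hπ : ∀ e, Function.Injective (π e)) {s : Fin n → Finset E}
    (hs : IsGreedyState M π s) {i₀ : Fin n} {e₀ : E} (hg : IsGreedyChoice M c π s i₀ e₀) :
    IsGreedyState M π (Function.update s i₀ (insert e₀ (s i₀))) where
  indep i := by
    by_cases hi : i = i₀
    · subst hi; simpa using hg.canAdd.2
    · simpa [hi] using hs.indep i
  priority_lt e i i' he hadd := by
    have hadd' := hadd.anti (subset_update_insert s i₀ i e₀)
    rcases mem_update_insert.1 he with he | ⟨rfl, rfl⟩
    · exact hs.priority_lt e i i' he hadd'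
    · have hi : i ≠ i' := by rintro rfl; exact hadd.1 (mem_update_insert.2 (Or.inr ⟨rfl, rfl⟩))
      exact (hg.priority_le i hadd').lt_of_ne ((hπ e).ne hi.symm)

lemma deviationCost_le_cost_load_succ (hc : ∀ e, Monotone (c e)) {s sf : Fin n → Finset E}
    {i : Fin n} {e : E}
    (h : ∀ i', i' ≠ i → e ∈ sf i' → π e i' < π e i → e ∈ s i') :
    deviationCost c π sf i e ≤ c e (load s e + 1) :=
  hc e (Nat.succ_le_succ (card_le_card fun i' hi' => by
    simp only [mem_filter, mem_univ, true_and] at hi' ⊢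
    exact h i' hi'.1 hi'.2.1 hi'.2.2))

lemma IsGreedyState.cost_load_succ_le_deviationCost (hc : ∀ e, Monotone (c e))
    {s sf : Fin n → Finset E} (hs : IsGreedyState M π s) (hsf : ∀ i, s i ⊆ sf i) {i : Fin n} {e : E}
    (h : CanAdd M s i e) : c e (load s e + 1) ≤ deviationCost c π sf i e :=
  hc e (Nat.succ_le_succ (card_le_card fun i' hi' => by
    simp only [mem_filter, mem_univ, true_and] at hi' ⊢
    exact ⟨by rintro rfl; exact h.1 hi', hsf i' hi', hs.priority_lt e i i' hi' h⟩))

lemma IsGreedyCompletion.of_update (hc : ∀ e, Monotone (c e)) {s sf : Fin n → Finset E}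
    (hs : IsGreedyState M π s) {i₀ : Fin n} {e₀ : E} (hg : IsGreedyChoice M c π s i₀ e₀)
    (hsf : IsGreedyCompletion M c π (Function.update s i₀ (insert e₀ (s i₀))) sf) :
    IsGreedyCompletion M c π s sf where
  isBase := hsf.isBase
  priority_lt e i i' he hne he' := by
    by_cases he₀ : i = i₀ ∧ e = e₀
    · obtain ⟨rfl, rfl⟩ := he₀
      exact hs.priority_lt e i i' he' hg.canAdd
    · exact hsf.priority_lt e i i' he (by simp [mem_update_insert, hne, he₀])
        (subset_update_insert s i₀ i' e₀ he')
  greedy i := by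
    by_cases hi : i = i₀
    · subst hi
      have hsub : ∀ j, s j ⊆ sf j := fun j =>
        (subset_update_insert s i j e₀).trans (Matroid.subset_of_greedy (hsf.greedy j))
      refine .head ⟨e₀, hg.canAdd.1, fun e he hins => ?_, rfl⟩
        (by simpa using hsf.greedy i)
      calc deviationCost c π sf i e₀ ≤ c e₀ (load s e₀ + 1) :=
            deviationCost_le_cost_load_succ hc fun i' hi' he' hlt => by
              by_contra hs'
              exact (hsf.priority_lt e₀ i' i he' (by simp [hs', hi'])
                (mem_update_insert.2 (Or.inr ⟨rfl, rfl⟩))).asymm hlt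
        _ ≤ c e (load s e + 1) := hg.cost_le i e ⟨he, hins⟩
        _ ≤ deviationCost c π sf i e := hs.cost_load_succ_le_deviationCost hc hsub ⟨he, hins⟩
    · simpa [hi] using hsf.greedy i

theorem IsGreedyState.exists_isGreedyCompletion [Fintype E] (hc : ∀ e, Monotone (c e))
    (hπ : ∀ e, Function.Injective (π e)) {s : Fin n → Finset E} (hs : IsGreedyState M π s) :
    ∃ sf, IsGreedyCompletion M c π s sf := by
  by_cases h : ∃ i e, CanAdd M s i e
  · obtain ⟨i, e, hg⟩ := exists_isGreedyChoice (c := c) h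
    obtain ⟨sf, hsf⟩ := (hs.update hπ hg).exists_isGreedyCompletion hc hπ
    exact ⟨sf, hsf.of_update hc hs hg⟩
  · push Not at h
    exact ⟨s, isGreedyCompletion_self hs fun i e => h i e⟩
termination_by ∑ j, #(s j)ᶜ
decreasing_by exact sum_card_compl_update_insert_lt hg.canAdd.1

end CongestionGame

/-- In every matroid congestion game with priority lists and unit-weight players,
a pure Nash equilibrium exists: a profile of bases such that no player can
strictly decrease its cost by switching to another basis of its matroid. -/
theorem stmt15 {n : ℕ} {E : Type*} [Fintype E] [DecidableEq E]
    (M : Fin n → Matroid E)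
    (c : E → ℕ → ℝ) (hc : ∀ e, Monotone (c e))
    (π : E → Fin n → ℕ) (hπ : ∀ e, Function.Injective (π e)) :
    ∃ s : Fin n → Finset E,
      (∀ i, (M i).IsBase (↑(s i))) ∧
      (∀ (i : Fin n) (t : Finset E), (M i).IsBase (↑t) →
        matCost c π s i ≤ matCost c π (Function.update s i t) i) := by
  have hempty : IsGreedyState M π (fun _ => ∅) :=
    ⟨fun i => by simp, fun e _ _ he => absurd he (notMem_empty e)⟩
  obtain ⟨s, hs⟩ := hempty.exists_isGreedyCompletion (c := c) hc hπ
  refine ⟨s, hs.isBase, fun i t ht => ?_⟩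
  have hcard : #t = #(s i) := by
    simpa using ht.ncard_eq_ncard_of_isBase (hs.isBase i)
  calc matCost c π s i = ∑ e ∈ s i \ ∅, deviationCost c π s i e := by
        rw [sdiff_empty, ← matCost_update_eq_sum_deviationCost hπ, Function.update_eq_self]
    _ ≤ ∑ e ∈ t \ ∅, deviationCost c π s i e :=
        Matroid.sum_sdiff_le_of_greedy (hs.greedy i) (hs.isBase i).indep ht.indep
          (empty_subset t) hcard
    _ = matCost c π (Function.update s i t) i := by
        rw [sdiff_empty, matCost_update_eq_sum_deviationCost hπ]
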